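/- arXiv:1707.00092 — 2 statements merged into one kernel-verified Lean document; each statement's English description precedes it below -/
import Mathlib

section
/- Let 1 ≤ q ≤ p < ∞, let ω be a weight on ℝⁿ, and let {E_j}_{j≥1} be a collection of measurable sets such that ∑_{j≥1} χ_{E_j}(x) ≤ C for all x. Then ∑_{j≥1} ‖χ_{E_j} f‖_{L^{p,q}(ω)}^p ≤ C' ‖f‖_{L^{p,q}(ω)}^p for some constant C' depending only on C, p, q. -/
open MeasureTheory Set ENNReal

noncomputable section

/-- The measure `ω(x) dx` on `ℝⁿ`. -/
def wMeas {n : ℕ} (ω : EuclideanSpace ℝ (Fin n) → ℝ≥0∞) :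
    Measure (EuclideanSpace ℝ (Fin n)) := volume.withDensity ω

/-- Distribution function of `f` with respect to the measure `ω dx`. -/
def distFn {n : ℕ} (ω f : EuclideanSpace ℝ (Fin n) → ℝ≥0∞) (s : ℝ≥0∞) : ℝ≥0∞ :=
  wMeas ω {x | s < f x}

/-- Decreasing rearrangement of `f` with respect to `ω dx`. -/
def rearr {n : ℕ} (ω f : EuclideanSpace ℝ (Fin n) → ℝ≥0∞) (t : ℝ≥0∞) : ℝ≥0∞ :=
  sInf {s : ℝ≥0∞ | distFn ω f s ≤ t}

/-- The weighted Lorentz quasinorm `‖f‖_{L^{p,q}(ω)}`; `q = ∞` gives the weak norm. -/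
def lorentzNorm {n : ℕ} (ω : EuclideanSpace ℝ (Fin n) → ℝ≥0∞) (p q : ℝ≥0∞)
    (f : EuclideanSpace ℝ (Fin n) → ℝ≥0∞) : ℝ≥0∞ :=
  if q = ∞ then ⨆ t : {t : ℝ // 0 < t},
      ENNReal.ofReal t.1 ^ (1 / p.toReal) * rearr ω f (ENNReal.ofReal t.1)
  else ((q / p) * ∫⁻ t in Ioi (0:ℝ),
      (ENNReal.ofReal t ^ (1 / p.toReal) * rearr ω f (ENNReal.ofReal t)) ^ q.toReal
        / ENNReal.ofReal t) ^ (1 / q.toReal)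

/-- Axis-parallel cubes in `ℝⁿ`. -/
def IsCube {n : ℕ} (Q : Set (EuclideanSpace ℝ (Fin n))) : Prop :=
  ∃ (c : EuclideanSpace ℝ (Fin n)) (h : ℝ), 0 < h ∧
    Q = {y | ∀ i, |y i - c i| ≤ h}

/-- Conjugate exponent in `ℝ≥0∞`. -/
def conjE (p : ℝ≥0∞) : ℝ≥0∞ := if p = ∞ then 1 else p / (p - 1)

/-- The class `A(p,q)` of weights. -/
def Apq {n : ℕ} (ω : EuclideanSpace ℝ (Fin n) → ℝ≥0∞) (p q : ℝ≥0∞) : Prop :=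
  ∃ C : ℝ≥0∞, 0 < C ∧ C < ∞ ∧ ∀ Q : Set (EuclideanSpace ℝ (Fin n)), IsCube Q →
    lorentzNorm ω p q (Q.indicator 1) *
      lorentzNorm ω (conjE p) (conjE q) (Q.indicator fun x => (ω x)⁻¹) ≤ C * volume Q

/-- The Muckenhoupt class `A_p`. -/
def IsMuckenhouptAp {n : ℕ} (ω : EuclideanSpace ℝ (Fin n) → ℝ≥0∞) (p : ℝ) : Prop :=
  ∃ C : ℝ≥0∞, C < ∞ ∧ ∀ Q : Set (EuclideanSpace ℝ (Fin n)), IsCube Q →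
    ((volume Q)⁻¹ * ∫⁻ x in Q, ω x) *
      ((volume Q)⁻¹ * ∫⁻ x in Q, (ω x) ^ (-(1 / (p - 1)))) ^ (p - 1) ≤ C

/-- Hardy–Littlewood maximal function over centered cubes, `ℝ≥0∞`-valued. -/
def HLMax {n : ℕ} (f : EuclideanSpace ℝ (Fin n) → ℝ≥0∞)
    (x : EuclideanSpace ℝ (Fin n)) : ℝ≥0∞ :=
  ⨆ h : {h : ℝ // 0 < h},
    (volume {y : EuclideanSpace ℝ (Fin n) | ∀ i, |y i - x i| ≤ h.1})⁻¹ *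
      ∫⁻ y in {y : EuclideanSpace ℝ (Fin n) | ∀ i, |y i - x i| ≤ h.1}, f y

/-- `|f⃗(x)|_r = (∑_k |f_k(x)|^r)^{1/r}`. -/
def vecLr {n : ℕ} (r : ℝ) (f : ℕ → EuclideanSpace ℝ (Fin n) → ℝ)
    (x : EuclideanSpace ℝ (Fin n)) : ℝ≥0∞ :=
  (∑' k, ENNReal.ofReal |f k x| ^ r) ^ (1 / r)

/-- `|M(f⃗)(x)|_r = (∑_k (M f_k)(x)^r)^{1/r}`. -/
def vecMaxLr {n : ℕ} (r : ℝ) (f : ℕ → EuclideanSpace ℝ (Fin n) → ℝ)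
    (x : EuclideanSpace ℝ (Fin n)) : ℝ≥0∞ :=
  (∑' k, (HLMax (fun y => ENNReal.ofReal |f k y|) x) ^ r) ^ (1 / r)

end

/-! For `0 < q ≤ p`, Tonelli's theorem and the duality `s < f*(t) ⇒ t < λ_f(s)` between the
rearrangement and the distribution function give the layer-cake form
`‖f‖_{L^{p,q}(ω)}^p = (q ∫₀^∞ λ_f(s)^{q/p} dν(s))^{p/q}` with `dν(s) = s^{q-1} ds`.
With `r = p/q ≥ 1`, Minkowski's integral inequality in `ℓ^r` bounds
`∑_j (∫ λ_{χ_{E_j} f}^{1/r} dν)^r` by `(∫ (∑_j λ_{χ_{E_j} f})^{1/r} dν)^r`, and the bounded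
overlap gives `∑_j λ_{χ_{E_j} f} ≤ C λ_f` pointwise; hence `C' = C + 1` works. -/

noncomputable def powMeasure (α : ℝ) : Measure ℝ :=
  (volume.restrict (Ioi 0)).withDensity fun t => ENNReal.ofReal (t ^ (α - 1))

instance (α : ℝ) : SFinite (powMeasure α) := Measure.withDensity.instSFinite

section powMeasure

variable {α : ℝ}

lemma lintegral_powMeasure {g : ℝ → ℝ≥0∞} (hg : Measurable g) :
    ∫⁻ t, g t ∂powMeasure α = ∫⁻ t in Ioi 0, ENNReal.ofReal (t ^ (α - 1)) * g t :=
  lintegral_withDensity_eq_lintegral_mul _ (by fun_prop) hg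

lemma powMeasure_Ioc (hα : 0 < α) {A : ℝ} (hA : 0 ≤ A) :
    powMeasure α (Ioc 0 A) = ENNReal.ofReal A ^ α / ENNReal.ofReal α := by
  have hint : IntegrableOn (fun t : ℝ => t ^ (α - 1)) (Ioc 0 A) :=
    (intervalIntegrable_iff_integrableOn_Ioc_of_le hA).mp
      (intervalIntegral.intervalIntegrable_rpow' (by linarith))
  rw [powMeasure, withDensity_apply' _, Measure.restrict_restrict measurableSet_Ioc,
    Ioc_inter_Ioi, max_self,
    ← ofReal_integral_eq_lintegral_ofReal hint
      (ae_restrict_of_forall_mem measurableSet_Ioc fun t ht => Real.rpow_nonneg ht.1.le _),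
    ← intervalIntegral.integral_of_le hA, integral_rpow (Or.inl (by linarith)), sub_add_cancel,
    Real.zero_rpow hα.ne', sub_zero, ENNReal.ofReal_div_of_pos hα,
    ENNReal.ofReal_rpow_of_nonneg hA hα.le]

lemma powMeasure_Ioi (hα : 0 < α) : powMeasure α (Ioi 0) = ∞ := by
  refine ENNReal.eq_top_of_forall_nnreal_le fun r => ?_
  set A : ℝ := (α * r) ^ (1 / α)
  have hA : 0 ≤ A := by positivity
  calc (r : ℝ≥0∞) = ENNReal.ofReal A ^ α / ENNReal.ofReal α := by
        rw [ENNReal.ofReal_rpow_of_nonneg hA hα.le, ← Real.rpow_mul (by positivity),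
          one_div_mul_cancel hα.ne', Real.rpow_one, ← ENNReal.ofReal_div_of_pos hα,
          mul_div_cancel_left₀ _ hα.ne', ENNReal.ofReal_coe_nnreal]
    _ = powMeasure α (Ioc 0 A) := (powMeasure_Ioc hα hA).symm
    _ ≤ powMeasure α (Ioi 0) := measure_mono Ioc_subset_Ioi_self

lemma powMeasure_compl_Ioi : powMeasure α (Ioi 0)ᶜ = 0 := by
  rw [powMeasure, withDensity_apply' _, Measure.restrict_restrict' measurableSet_Ioi,
    compl_inter_self, Measure.restrict_empty, lintegral_zero_measure]

lemma powMeasure_absolutelyContinuous : powMeasure α ≪ volume :=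
  (withDensity_absolutelyContinuous _ _).trans Measure.absolutelyContinuous_restrict

lemma powMeasure_eq_top_of_Ioi_subset (hα : 0 < α) {s : Set ℝ} (hs : Ioi 0 ⊆ s) :
    powMeasure α s = ∞ :=
  top_le_iff.mp (powMeasure_Ioi hα ▸ measure_mono hs)

lemma powMeasure_ofReal_le (hα : 0 < α) (a : ℝ≥0∞) :
    powMeasure α {t | ENNReal.ofReal t ≤ a} = a ^ α / ENNReal.ofReal α := by
  rcases eq_or_ne a ∞ with rfl | ha
  · rw [powMeasure_eq_top_of_Ioi_subset (s := {t | ENNReal.ofReal t ≤ ∞}) hα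
        fun _ _ => le_top (a := ENNReal.ofReal _),
      ENNReal.top_rpow_of_pos hα, ENNReal.top_div_of_ne_top ENNReal.ofReal_ne_top]
  have : {t | ENNReal.ofReal t ≤ a} ∩ Ioi 0 = Ioc 0 a.toReal := by
    ext t
    simp +contextual [ENNReal.ofReal_le_iff_le_toReal ha, and_comm]
  rw [← measure_inter_conull powMeasure_compl_Ioi, this, powMeasure_Ioc hα ENNReal.toReal_nonneg,
    ENNReal.ofReal_toReal ha]

lemma powMeasure_ofReal_lt (hα : 0 < α) (a : ℝ≥0∞) :
    powMeasure α {t | ENNReal.ofReal t < a} = a ^ α / ENNReal.ofReal α := by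
  rcases eq_or_ne a ∞ with rfl | ha
  · rw [powMeasure_eq_top_of_Ioi_subset (s := {t | ENNReal.ofReal t < ∞}) hα
        fun _ _ => ENNReal.ofReal_lt_top,
      ENNReal.top_rpow_of_pos hα, ENNReal.top_div_of_ne_top ENNReal.ofReal_ne_top]
  have : {t | ENNReal.ofReal t < a} ∩ Ioi 0 = Ioo 0 a.toReal := by
    ext t
    simp only [mem_inter_iff, mem_ofPred_eq, mem_Ioi, mem_Ioo]
    exact ⟨fun h => ⟨h.2, (ENNReal.ofReal_lt_iff_lt_toReal h.2.le ha).1 h.1⟩,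
      fun h => ⟨(ENNReal.ofReal_lt_iff_lt_toReal h.1.le ha).2 h.2, h.1⟩⟩
  rw [← measure_inter_conull powMeasure_compl_Ioi, this,
    measure_congr (powMeasure_absolutelyContinuous.ae_eq Ioo_ae_eq_Ioc),
    powMeasure_Ioc hα ENNReal.toReal_nonneg, ENNReal.ofReal_toReal ha]

end powMeasure

lemma lintegral_rpow_powMeasure_le_of_lt_imp_le {α β : ℝ} (hα : 0 < α) (hβ : 0 < β)
    {u v : ℝ → ℝ≥0∞} (hu : Measurable u)
    (huv : ∀ s t : ℝ, 0 < s → 0 < t → ENNReal.ofReal s < u t → ENNReal.ofReal t ≤ v s) :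
    ∫⁻ t, u t ^ β ∂powMeasure α
      ≤ ENNReal.ofReal β / ENNReal.ofReal α * ∫⁻ s, v s ^ α ∂powMeasure β := by
  set S : Set (ℝ × ℝ) := {z | ENNReal.ofReal z.2 < u z.1}
  have hS : MeasurableSet S := measurableSet_lt (by fun_prop) (hu.comp measurable_fst)
  have hβ₀ : ENNReal.ofReal β ≠ 0 := by simpa using hβ
  have hsection : ∀ s, 0 < s →
      powMeasure α ((fun t => (t, s)) ⁻¹' S) ≤ v s ^ α / ENNReal.ofReal α := fun s hs => by
    rw [← powMeasure_ofReal_le hα, ← measure_inter_conull powMeasure_compl_Ioi]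
    exact measure_mono fun t ⟨hts, ht⟩ => huv s t hs ht hts
  calc ∫⁻ t, u t ^ β ∂powMeasure α
      = ENNReal.ofReal β * ∫⁻ t, powMeasure β (Prod.mk t ⁻¹' S) ∂powMeasure α := by
        rw [← lintegral_const_mul' _ _ ENNReal.ofReal_ne_top]
        congr 1 with t
        rw [show Prod.mk t ⁻¹' S = {s | ENNReal.ofReal s < u t} from rfl, powMeasure_ofReal_lt hβ,
          ENNReal.mul_div_cancel hβ₀ ENNReal.ofReal_ne_top]
    _ = ENNReal.ofReal β * ∫⁻ s, powMeasure α ((fun t => (t, s)) ⁻¹' S) ∂powMeasure β := by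
        rw [← Measure.prod_apply hS, Measure.prod_apply_symm hS]
    _ ≤ ENNReal.ofReal β * ∫⁻ s, v s ^ α / ENNReal.ofReal α ∂powMeasure β := by
        gcongr ENNReal.ofReal β * ?_
        refine lintegral_mono_ae ?_
        filter_upwards [mem_ae_iff.mpr powMeasure_compl_Ioi] with s hs
        exact hsection s hs
    _ = ENNReal.ofReal β / ENNReal.ofReal α * ∫⁻ s, v s ^ α ∂powMeasure β := by
        simp only [div_eq_mul_inv]
        rw [lintegral_mul_const' _ _ (by simpa using hα), mul_assoc, mul_comm (_⁻¹)]

lemma tsum_measure_inter_le {X ι : Type*} [MeasurableSpace X] [Countable ι] (μ : Measure X)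
    {E : ι → Set X} (hE : ∀ j, MeasurableSet (E j)) {C : ℝ≥0∞}
    (hC : ∀ x, ∑' j, (E j).indicator (fun _ => (1 : ℝ≥0∞)) x ≤ C) (A : Set X) :
    ∑' j, μ (E j ∩ A) ≤ C * μ A := by
  set B := toMeasurable μ A
  calc ∑' j, μ (E j ∩ A) ≤ ∑' j, μ.restrict B (E j) := ENNReal.tsum_le_tsum fun j => by
        rw [Measure.restrict_apply (hE j)]
        exact measure_mono (inter_subset_inter_right _ (subset_toMeasurable μ A))
    _ = ∫⁻ x, ∑' j, (E j).indicator (fun _ => (1 : ℝ≥0∞)) x ∂μ.restrict B := by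
        rw [lintegral_tsum fun j => (measurable_const.indicator (hE j)).aemeasurable]
        exact tsum_congr fun j => (lintegral_indicator_one (hE j)).symm
    _ ≤ ∫⁻ _, C ∂μ.restrict B := lintegral_mono hC
    _ = C * μ A := by rw [lintegral_const, Measure.restrict_apply_univ, measure_toMeasurable]

section Minkowski

variable {X ι : Type*} [MeasurableSpace X] (μ : Measure X) {r : ℝ}

lemma lintegral_le_lintegral_sum_rpow_rpow_inv (hr : 0 < r) {s : Finset ι} {j : ι} (hj : j ∈ s)
    (h : ι → X → ℝ≥0∞) :
    ∫⁻ a, h j a ∂μ ≤ ∫⁻ a, (∑ i ∈ s, h i a ^ r) ^ (1 / r) ∂μ := by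
  refine lintegral_mono fun a => ?_
  calc h j a = (h j a ^ r) ^ (1 / r) := by rw [one_div, ENNReal.rpow_rpow_inv hr.ne']
    _ ≤ _ := by
      gcongr
      exact Finset.single_le_sum (f := fun i => h i a ^ r) (fun _ _ => zero_le) hj

lemma sum_rpow_lintegral_le_of_one_lt (hr : 1 < r) (s : Finset ι) (h : ι → X → ℝ≥0∞)
    (hm : ∀ j, AEMeasurable (h j) μ) :
    ∑ j ∈ s, (∫⁻ a, h j a ∂μ) ^ r ≤ (∫⁻ a, (∑ j ∈ s, h j a ^ r) ^ (1 / r) ∂μ) ^ r := by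
  have hr₀ : 0 < r := one_pos.trans hr
  set A := fun j => ∫⁻ a, h j a ∂μ
  set P := ∑ j ∈ s, A j ^ r
  set T := ∫⁻ a, (∑ j ∈ s, h j a ^ r) ^ (1 / r) ∂μ
  have hconj := (Real.HolderConjugate.conjExponent hr).symm
  set r' := r.conjExponent
  -- Hölder against the dual sequence `A j ^ (r - 1)`, whose `r'`-th powers are `A j ^ r`.
  have hPT : P ≤ P ^ (1 / r') * T := calc
    P = ∑ j ∈ s, A j ^ (r - 1) * A j := Finset.sum_congr rfl fun j _ => by
          simpa using ENNReal.rpow_add_of_nonneg (x := A j) (r - 1) 1 (by linarith) zero_le_one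
    _ = ∫⁻ a, ∑ j ∈ s, A j ^ (r - 1) * h j a ∂μ := by
          rw [lintegral_finsetSum' _ fun j _ => (hm j).const_mul _]
          exact Finset.sum_congr rfl fun j _ => (lintegral_const_mul'' _ (hm j)).symm
    _ ≤ ∫⁻ a, (∑ j ∈ s, (A j ^ (r - 1)) ^ r') ^ (1 / r') * (∑ j ∈ s, h j a ^ r) ^ (1 / r) ∂μ :=
          lintegral_mono fun a => ENNReal.inner_le_Lp_mul_Lq _ _ _ hconj
    _ = P ^ (1 / r') * T := by
          simp only [← ENNReal.rpow_mul, hconj.symm.sub_one_mul_conj]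
          exact lintegral_const_mul'' _
            ((Finset.aemeasurable_fun_sum _ fun j _ => (hm j).pow_const r).pow_const _)
  by_cases hT : T = ∞
  · rw [hT, ENNReal.top_rpow_of_pos hr₀]
    exact le_top
  have hP : P ≠ ∞ := ENNReal.sum_ne_top.2 fun j hj => ENNReal.rpow_ne_top_of_nonneg hr₀.le
    (ne_top_of_le_ne_top hT (lintegral_le_lintegral_sum_rpow_rpow_inv μ hr₀ hj h))
  rcases eq_or_ne P 0 with hP0 | hP0
  · rw [hP0]
    exact zero_le
  have hsplit : P ^ (1 / r) * P ^ (1 / r') = P := by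
    rw [← ENNReal.rpow_add _ _ hP0 hP, one_div, one_div, add_comm, hconj.inv_add_inv_eq_one,
      ENNReal.rpow_one]
  have hroot : P ^ (1 / r) ≤ T := by
    have hX₀ : P ^ (1 / r') ≠ 0 := (ENNReal.rpow_pos (pos_iff_ne_zero.2 hP0) hP).ne'
    have hX : P ^ (1 / r') ≠ ∞ := ENNReal.rpow_ne_top_of_nonneg (by simpa using hconj.nonneg) hP
    rw [← ENNReal.mul_le_mul_iff_left hX₀ hX, hsplit, mul_comm]
    exact hPT
  calc P = (P ^ (1 / r)) ^ r := by rw [one_div, ENNReal.rpow_inv_rpow hr₀.ne']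
    _ ≤ T ^ r := by gcongr

lemma tsum_rpow_lintegral_le (hr : 1 ≤ r) (h : ι → X → ℝ≥0∞) (hm : ∀ j, AEMeasurable (h j) μ) :
    ∑' j, (∫⁻ a, h j a ∂μ) ^ r ≤ (∫⁻ a, (∑' j, h j a ^ r) ^ (1 / r) ∂μ) ^ r := by
  rw [ENNReal.tsum_eq_iSup_sum]
  refine iSup_le fun s => ?_
  calc ∑ j ∈ s, (∫⁻ a, h j a ∂μ) ^ r ≤ (∫⁻ a, (∑ j ∈ s, h j a ^ r) ^ (1 / r) ∂μ) ^ r := by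
        rcases hr.eq_or_lt with rfl | hr
        · simp only [ENNReal.rpow_one, div_one]
          exact (lintegral_finsetSum' s fun j _ => hm j).ge
        · exact sum_rpow_lintegral_le_of_one_lt μ hr s h hm
    _ ≤ (∫⁻ a, (∑' j, h j a ^ r) ^ (1 / r) ∂μ) ^ r := by
        gcongr with a
        exact ENNReal.sum_le_tsum s

lemma tsum_rpow_lintegral_rpow_inv_le (hr : 1 ≤ r) {g : ι → X → ℝ≥0∞} {G : X → ℝ≥0∞}
    (hg : ∀ j, AEMeasurable (g j) μ) {C : ℝ≥0∞} (hC : C ≠ ∞) (hgG : ∀ a, ∑' j, g j a ≤ C * G a) :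
    ∑' j, (∫⁻ a, g j a ^ (1 / r) ∂μ) ^ r ≤ C * (∫⁻ a, G a ^ (1 / r) ∂μ) ^ r := by
  have hr₀ : 0 < r := one_pos.trans_le hr
  calc ∑' j, (∫⁻ a, g j a ^ (1 / r) ∂μ) ^ r
      ≤ (∫⁻ a, (∑' j, (g j a ^ (1 / r)) ^ r) ^ (1 / r) ∂μ) ^ r :=
        tsum_rpow_lintegral_le μ hr _ fun j => (hg j).pow_const _
    _ = (∫⁻ a, (∑' j, g j a) ^ (1 / r) ∂μ) ^ r := by
        simp only [one_div, ENNReal.rpow_inv_rpow hr₀.ne']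
    _ ≤ (∫⁻ a, (C * G a) ^ (1 / r) ∂μ) ^ r := by
        gcongr with a
        exact hgG a
    _ = C * (∫⁻ a, G a ^ (1 / r) ∂μ) ^ r := by
        simp only [ENNReal.mul_rpow_of_nonneg _ _ (one_div_nonneg.2 hr₀.le)]
        rw [lintegral_const_mul' _ _ (ENNReal.rpow_ne_top_of_nonneg (by positivity) hC),
          ENNReal.mul_rpow_of_nonneg _ _ hr₀.le, ← ENNReal.rpow_mul, one_div_mul_cancel hr₀.ne',
          ENNReal.rpow_one]

end Minkowski

section Lorentz

variable {n : ℕ} (ω f : EuclideanSpace ℝ (Fin n) → ℝ≥0∞)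

lemma distFn_antitone : Antitone (distFn ω f) :=
  fun _ _ hab => measure_mono fun _ hx => hab.trans_lt hx

lemma rearr_antitone : Antitone (rearr ω f) :=
  fun _ _ hab => sInf_le_sInf fun _ hs => hs.trans hab

lemma measurable_rearr_ofReal : Measurable fun t : ℝ => rearr ω f (ENNReal.ofReal t) :=
  ((rearr_antitone ω f).comp_monotone ENNReal.ofReal_mono).measurable

lemma measurable_distFn_ofReal : Measurable fun s : ℝ => distFn ω f (ENNReal.ofReal s) :=
  ((distFn_antitone ω f).comp_monotone ENNReal.ofReal_mono).measurable

variable {ω f}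

lemma lt_distFn_of_lt_rearr {a b : ℝ≥0∞} (h : b < rearr ω f a) : a < distFn ω f b :=
  not_le.mp fun hba => h.not_ge (sInf_le (s := {s | distFn ω f s ≤ a}) hba)

lemma le_rearr_of_lt_distFn {a b : ℝ≥0∞} (h : a < distFn ω f b) : b ≤ rearr ω f a :=
  le_sInf fun _ hs => not_lt.mp fun hsb =>
    (h.trans_le ((distFn_antitone ω f hsb.le).trans hs)).false

lemma distFn_indicator (E : Set (EuclideanSpace ℝ (Fin n))) (s : ℝ≥0∞) :
    distFn ω (E.indicator f) s = wMeas ω (E ∩ {x | s < f x}) := by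
  rw [distFn]
  congr 1 with x
  by_cases hx : x ∈ E <;> simp [hx]

lemma tsum_distFn_indicator_le {ι : Type*} [Countable ι] {E : ι → Set (EuclideanSpace ℝ (Fin n))}
    (hE : ∀ j, MeasurableSet (E j)) {C : ℝ≥0∞}
    (hC : ∀ x, ∑' j, (E j).indicator (fun _ => (1 : ℝ≥0∞)) x ≤ C) (s : ℝ≥0∞) :
    ∑' j, distFn ω ((E j).indicator f) s ≤ C * distFn ω f s := by
  simp only [distFn_indicator]
  exact tsum_measure_inter_le _ hE hC _

lemma lorentzNorm_rpow_eq_lintegral_rearr {p q : ℝ} (hp : 0 < p) (hq : 0 < q) :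
    lorentzNorm ω (ENNReal.ofReal p) (ENNReal.ofReal q) f ^ p
      = (ENNReal.ofReal (q / p) * ∫⁻ t, rearr ω f (ENNReal.ofReal t) ^ q ∂powMeasure (q / p))
          ^ (p / q) := by
  rw [lorentzNorm, if_neg ENNReal.ofReal_ne_top, ENNReal.toReal_ofReal hq.le,
    ENNReal.toReal_ofReal hp.le, ← ENNReal.rpow_mul, one_div_mul_eq_div,
    ENNReal.ofReal_div_of_pos hp,
    lintegral_powMeasure (g := fun t => rearr ω f (ENNReal.ofReal t) ^ q)
      ((measurable_rearr_ofReal ω f).pow_const _)]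
  congr 2
  refine setLIntegral_congr_fun measurableSet_Ioi fun t (ht : 0 < t) => ?_
  have h : ENNReal.ofReal t ^ (1 / p * q) / ENNReal.ofReal t
      = ENNReal.ofReal (t ^ (q / p - 1)) := by
    rw [div_eq_mul_inv, ← ENNReal.rpow_neg_one, ← ENNReal.rpow_add _ _ (by simpa using ht)
      ENNReal.ofReal_ne_top, ENNReal.ofReal_rpow_of_pos ht]
    ring_nf
  rw [ENNReal.mul_rpow_of_nonneg _ _ hq.le, ← ENNReal.rpow_mul, ← h, ENNReal.mul_div_right_comm]

lemma lintegral_rearr_rpow_eq {p q : ℝ} (hp : 0 < p) (hq : 0 < q) :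
    ∫⁻ t, rearr ω f (ENNReal.ofReal t) ^ q ∂powMeasure (q / p)
      = ENNReal.ofReal p * ∫⁻ s, distFn ω f (ENNReal.ofReal s) ^ (q / p) ∂powMeasure q := by
  have hqp : 0 < q / p := div_pos hq hp
  have hle := lintegral_rpow_powMeasure_le_of_lt_imp_le hqp hq (measurable_rearr_ofReal ω f)
    fun _ _ _ _ h => (lt_distFn_of_lt_rearr h).le
  have hge := lintegral_rpow_powMeasure_le_of_lt_imp_le hq hqp (measurable_distFn_ofReal ω f)
    fun _ _ _ _ h => le_rearr_of_lt_distFn h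
  rw [← ENNReal.ofReal_div_of_pos hqp, div_div_cancel₀ hq.ne'] at hle
  rw [← ENNReal.ofReal_div_of_pos hq, div_div_cancel_left' hq.ne', ENNReal.ofReal_inv_of_pos hp]
    at hge
  refine le_antisymm hle ?_
  calc ENNReal.ofReal p * ∫⁻ s, distFn ω f (ENNReal.ofReal s) ^ (q / p) ∂powMeasure q
      ≤ ENNReal.ofReal p * ((ENNReal.ofReal p)⁻¹ *
          ∫⁻ t, rearr ω f (ENNReal.ofReal t) ^ q ∂powMeasure (q / p)) := by gcongr
    _ = _ := ENNReal.mul_inv_cancel_left (by simpa using hp) ENNReal.ofReal_ne_top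

lemma lorentzNorm_rpow_eq_lintegral_distFn {p q : ℝ} (hp : 0 < p) (hq : 0 < q) :
    lorentzNorm ω (ENNReal.ofReal p) (ENNReal.ofReal q) f ^ p
      = (ENNReal.ofReal q * ∫⁻ s, distFn ω f (ENNReal.ofReal s) ^ (q / p) ∂powMeasure q)
          ^ (p / q) := by
  rw [lorentzNorm_rpow_eq_lintegral_rearr hp hq, lintegral_rearr_rpow_eq hp hq, ← mul_assoc,
    ← ENNReal.ofReal_mul (div_pos hq hp).le, div_mul_cancel₀ _ hp.ne']

end Lorentz

/-- If `1 ≤ q ≤ p < ∞` and `{E_j}` have overlap at most `C`, then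
`∑_j ‖χ_{E_j} f‖_{L^{p,q}(ω)}^p ≤ C' ‖f‖_{L^{p,q}(ω)}^p`, with `C'` depending only
on `C, p, q`. -/
theorem stmt2 (p q : ℝ) (C : ℝ≥0∞) (hq : 1 ≤ q) (hqp : q ≤ p) (hC : C < ∞) :
    ∃ C' : ℝ≥0∞, 0 < C' ∧ C' < ∞ ∧
      ∀ (n : ℕ) (ω f : EuclideanSpace ℝ (Fin n) → ℝ≥0∞)
        (E : ℕ → Set (EuclideanSpace ℝ (Fin n))),
        (∀ j, MeasurableSet (E j)) →
        (∀ x, (∑' j, (E j).indicator (fun _ => (1 : ℝ≥0∞)) x) ≤ C) →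
        ∑' j, (lorentzNorm ω (ENNReal.ofReal p) (ENNReal.ofReal q)
            ((E j).indicator f)) ^ p
          ≤ C' * (lorentzNorm ω (ENNReal.ofReal p) (ENNReal.ofReal q) f) ^ p := by
  have hq₀ : 0 < q := one_pos.trans_le hq
  have hp₀ : 0 < p := hq₀.trans_le hqp
  have hr : 1 ≤ p / q := (one_le_div hq₀).2 hqp
  refine ⟨C + 1, by simp, ENNReal.add_lt_top.2 ⟨hC, ENNReal.one_lt_top⟩,
    fun n ω f E hE hover => ?_⟩
  have hsum := tsum_rpow_lintegral_rpow_inv_le (powMeasure q) hr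
    (fun j => (measurable_distFn_ofReal ω ((E j).indicator f)).aemeasurable) hC.ne
    fun s => tsum_distFn_indicator_le hE hover (ENNReal.ofReal s)
  simp only [lorentzNorm_rpow_eq_lintegral_distFn hp₀ hq₀, ← one_div_div p q,
    ENNReal.mul_rpow_of_nonneg _ _ (zero_le_one.trans hr), ENNReal.tsum_mul_left]
  calc _ ≤ ENNReal.ofReal q ^ (p / q) * (C * _) := by gcongr
    _ ≤ _ := by
        rw [mul_left_comm]
        gcongr
        exact le_self_add
end

section
/- Let 1 < p, r < ∞ and suppose the vector-valued Hardy–Littlewood maximal operator satisfies the weak-type bound ‖M(f⃗)‖_{L^{p,∞}(ℓ^r,ω)} ≤ C ‖f⃗‖_{L^{p,1}(ℓ^r,ω)} for all f⃗ ∈ L^{p,1}(ℓ^r,ω). Then ω ∈ A(p,1). -/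
/-!
Testing the vector-valued inequality on sequences whose only nonzero entry is `χ_E` shows that
`M` is of restricted weak type `(p,p)` with respect to `ω`. For a cube `Q` and `E ⊆ Q` one has
`M χ_E ≥ |E| / (2ⁿ|Q|)` on `Q`, hence `ω(Q)^{1/p} |E| ≤ 2ⁿ C |Q| ω(E)^{1/p}`. Taking
`E = Q ∩ {ω⁻¹ > s}`, so that `s ω(E) ≤ |E|`, and `s` below the decreasing rearrangement of
`χ_Q ω⁻¹` at `t`, so that `ω(E) > t`, gives `s t^{1/p'} ω(Q)^{1/p} ≤ 2ⁿ C |Q|`. Since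
`‖χ_Q‖_{L^{p,1}(ω)} = ω(Q)^{1/p}`, this is the `A(p,1)` condition.
-/

open MeasureTheory Set ENNReal

section Cubes

variable {n : ℕ}

def cube (c : EuclideanSpace ℝ (Fin n)) (h : ℝ) : Set (EuclideanSpace ℝ (Fin n)) :=
  {y | ∀ i, |y i - c i| ≤ h}

theorem cube_eq_preimage_closedBall (c : EuclideanSpace ℝ (Fin n)) {h : ℝ} (hh : 0 ≤ h) :
    cube c h = WithLp.ofLp ⁻¹' Metric.closedBall (WithLp.ofLp c) h := by
  ext y
  simp [cube, dist_pi_le_iff hh, Real.dist_eq]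

theorem measurableSet_cube (c : EuclideanSpace ℝ (Fin n)) (h : ℝ) :
    MeasurableSet (cube c h) := by
  simp only [cube, Set.ofPred_forall]
  exact (isClosed_iInter fun i => isClosed_le (by fun_prop) continuous_const).measurableSet

theorem volume_cube (c : EuclideanSpace ℝ (Fin n)) {h : ℝ} (hh : 0 ≤ h) :
    volume (cube c h) = ENNReal.ofReal ((2 * h) ^ n) := by
  rw [cube_eq_preimage_closedBall c hh, (PiLp.volume_preserving_ofLp (Fin n)).measure_preimage
    measurableSet_closedBall.nullMeasurableSet, Real.volume_pi_closedBall _ hh, Fintype.card_fin]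

theorem cube_subset_cube_two_mul {c x : EuclideanSpace ℝ (Fin n)} {h : ℝ} (hx : x ∈ cube c h) :
    cube c h ⊆ cube x (2 * h) := fun y hy i => by
  calc |y i - x i| = |(y i - c i) - (x i - c i)| := by ring_nf
    _ ≤ |y i - c i| + |x i - c i| := abs_sub _ _
    _ ≤ 2 * h := by linarith [hy i, hx i]

theorem volume_cube_two_mul (c x : EuclideanSpace ℝ (Fin n)) {h : ℝ} (hh : 0 ≤ h) :
    volume (cube x (2 * h)) = 2 ^ n * volume (cube c h) := by
  rw [volume_cube x (by positivity), volume_cube c hh, ← ENNReal.ofReal_ofNat 2,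
    ← ENNReal.ofReal_pow zero_le_two, ← ENNReal.ofReal_mul (by positivity), ← mul_pow, ← mul_assoc]

end Cubes

theorem ENNReal.rpow_mul_le_of_forall_lt {a c S : ℝ≥0∞} {β : ℝ} (hβ : 0 < β)
    (h : ∀ u < a, u ^ β * c ≤ S) : a ^ β * c ≤ S := by
  refine ENNReal.mul_le_of_forall_lt fun a' ha' c' hc' => ?_
  have hroot : (a' ^ β⁻¹) ^ β = a' := by
    rw [← ENNReal.rpow_mul, inv_mul_cancel₀ hβ.ne', ENNReal.rpow_one]
  have hlt : a' ^ β⁻¹ < a := by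
    simpa [← ENNReal.rpow_mul, mul_inv_cancel₀ hβ.ne'] using
      ENNReal.rpow_lt_rpow ha' (inv_pos.2 hβ)
  calc a' * c' ≤ (a' ^ β⁻¹) ^ β * c := by rw [hroot]; gcongr
    _ ≤ S := h _ hlt

theorem setLIntegral_Ioo_rpow_sub_one {β A : ℝ} (hβ : 0 < β) (hA : 0 ≤ A) :
    ∫⁻ t in Ioo 0 A, ENNReal.ofReal (t ^ (β - 1)) = ENNReal.ofReal (A ^ β / β) := by
  have hint : IntegrableOn (fun t : ℝ => t ^ (β - 1)) (Ioo 0 A) :=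
    ((intervalIntegrable_iff_integrableOn_Ioc_of_le hA).1
      (intervalIntegral.intervalIntegrable_rpow' (by linarith))).mono_set Ioo_subset_Ioc_self
  rw [← ofReal_integral_eq_lintegral_ofReal hint
    ((ae_restrict_iff' measurableSet_Ioo).2 (ae_of_all _ fun t ht => Real.rpow_nonneg ht.1.le _)),
    ← integral_Ioc_eq_integral_Ioo, ← intervalIntegral.integral_of_le hA,
    integral_rpow (Or.inl (by linarith)), sub_add_cancel, Real.zero_rpow hβ.ne', sub_zero]

theorem setLIntegral_Ioi_rpow_sub_one {β : ℝ} (hβ : 0 < β) :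
    ∫⁻ t in Ioi 0, ENNReal.ofReal (t ^ (β - 1)) = ∞ := by
  refine eq_top_iff.2 ((lintegral_mono_set (Ioi_subset_Ioi zero_le_one)).trans' ?_)
  by_contra hfin
  have hint : IntegrableOn (fun t : ℝ => t ^ (β - 1)) (Ioi 1) :=
    ⟨(continuousOn_id.rpow_const fun t ht => Or.inl (zero_lt_one.trans ht).ne')
        |>.aestronglyMeasurable measurableSet_Ioi,
      (hasFiniteIntegral_iff_ofReal ((ae_restrict_iff' measurableSet_Ioi).2
        (ae_of_all _ fun t ht => Real.rpow_nonneg (zero_le_one.trans ht.le) _))).2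
        (not_le.1 hfin)⟩
  linarith [(integrableOn_Ioi_rpow_iff zero_lt_one).1 hint]

theorem setLIntegral_Ioi_indicator_rpow_sub_one {β : ℝ} (hβ : 0 < β) (a : ℝ≥0∞) :
    ∫⁻ t in Ioi 0, {t : ℝ | ENNReal.ofReal t < a}.indicator
      (fun t => ENNReal.ofReal (t ^ (β - 1))) t = ENNReal.ofReal β⁻¹ * a ^ β := by
  have hmeas : MeasurableSet {t : ℝ | ENNReal.ofReal t < a} :=
    measurableSet_lt ENNReal.measurable_ofReal measurable_const
  rw [lintegral_indicator hmeas, Measure.restrict_restrict hmeas]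
  rcases eq_or_ne a ∞ with rfl | ha
  · simp only [ofReal_lt_top, ofPred_true, univ_inter]
    rw [setLIntegral_Ioi_rpow_sub_one hβ, ENNReal.top_rpow_of_pos hβ, ENNReal.mul_top]
    simpa using hβ
  · have hset : {t : ℝ | ENNReal.ofReal t < a} ∩ Ioi 0 = Ioo 0 a.toReal := by
      ext t
      simp only [mem_inter_iff, mem_ofPred_eq, mem_Ioi, mem_Ioo]
      exact ⟨fun h => ⟨h.2, (ENNReal.ofReal_lt_iff_lt_toReal h.2.le ha).1 h.1⟩,
        fun h => ⟨(ENNReal.ofReal_lt_iff_lt_toReal h.1.le ha).2 h.2, h.1⟩⟩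
    rw [hset, setLIntegral_Ioo_rpow_sub_one hβ ENNReal.toReal_nonneg, div_eq_inv_mul,
      ENNReal.ofReal_mul (inv_nonneg.2 hβ.le), ← ENNReal.ofReal_rpow_of_nonneg ENNReal.toReal_nonneg
        hβ.le, ENNReal.ofReal_toReal ha]

section Rearrangement

variable {n : ℕ} (ω : EuclideanSpace ℝ (Fin n) → ℝ≥0∞)

theorem lt_distFn_of_lt_rearr_s9 {F : EuclideanSpace ℝ (Fin n) → ℝ≥0∞} {s t : ℝ≥0∞}
    (h : s < rearr ω F t) : t < distFn ω F s :=
  not_le.1 fun hle => h.not_ge (sInf_le hle)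

theorem le_rearr_of_le_on {F : EuclideanSpace ℝ (Fin n) → ℝ≥0∞}
    {S : Set (EuclideanSpace ℝ (Fin n))} {c t : ℝ≥0∞} (hc : ∀ x ∈ S, c ≤ F x)
    (ht : t < wMeas ω S) : c ≤ rearr ω F t :=
  le_sInf fun _ hs => not_lt.1 fun hsc =>
    (ht.trans_le (measure_mono fun x hx => hsc.trans_le (hc x hx))).not_ge hs

theorem distFn_indicator_one (S : Set (EuclideanSpace ℝ (Fin n))) (s : ℝ≥0∞) :
    distFn ω (S.indicator 1) s = if s < 1 then wMeas ω S else 0 := by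
  rw [distFn]
  split_ifs with hs
  · congr 1
    ext x
    by_cases hx : x ∈ S <;> simp [hx, hs]
  · convert measure_empty (μ := wMeas ω)
    ext x
    by_cases hx : x ∈ S <;> simp [hx, not_lt.1 hs]

theorem rearr_indicator_one (S : Set (EuclideanSpace ℝ (Fin n))) (t : ℝ≥0∞) :
    rearr ω (S.indicator 1) t = (Iio (wMeas ω S)).indicator 1 t := by
  by_cases ht : t < wMeas ω S
  · rw [indicator_of_mem (mem_Iio.2 ht), Pi.one_apply]
    refine le_antisymm (sInf_le (by simp [distFn_indicator_one])) (le_sInf fun s hs => ?_)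
    by_contra! hs1
    rw [mem_ofPred_eq, distFn_indicator_one, if_pos hs1] at hs
    exact ht.not_ge hs
  · rw [indicator_of_notMem (notMem_Iio.2 (not_lt.1 ht))]
    exact le_antisymm (sInf_le (by simpa [distFn_indicator_one] using ht)) zero_le

theorem wMeas_rpow_mul_le_lorentzNorm_top {P : ℝ≥0∞} (hP : 0 < P.toReal)
    {F : EuclideanSpace ℝ (Fin n) → ℝ≥0∞} {S : Set (EuclideanSpace ℝ (Fin n))} {c : ℝ≥0∞}
    (hc : ∀ x ∈ S, c ≤ F x) : wMeas ω S ^ (1 / P.toReal) * c ≤ lorentzNorm ω P ∞ F := by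
  rw [lorentzNorm, if_pos rfl]
  refine ENNReal.rpow_mul_le_of_forall_lt (by positivity) fun u hu => ?_
  rcases eq_or_ne u 0 with rfl | hu0
  · simp [ENNReal.zero_rpow_of_pos (inv_pos.2 hP)]
  have hut : u ≠ ∞ := hu.ne_top
  calc u ^ (1 / P.toReal) * c
      ≤ ENNReal.ofReal u.toReal ^ (1 / P.toReal) * rearr ω F (ENNReal.ofReal u.toReal) := by
        rw [ENNReal.ofReal_toReal hut]
        gcongr
        exact le_rearr_of_le_on ω hc hu
    _ ≤ _ := le_iSup (fun t : {t : ℝ // 0 < t} =>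
          ENNReal.ofReal t.1 ^ (1 / P.toReal) * rearr ω F (ENNReal.ofReal t.1))
        ⟨u.toReal, ENNReal.toReal_pos hu0 hut⟩

theorem lorentzNorm_one_indicator_one {P : ℝ≥0∞} (hP0 : P ≠ 0) (hP : P ≠ ∞)
    (S : Set (EuclideanSpace ℝ (Fin n))) :
    lorentzNorm ω P 1 (S.indicator 1) = wMeas ω S ^ (1 / P.toReal) := by
  have hp : 0 < P.toReal := ENNReal.toReal_pos hP0 hP
  have hintegrand : EqOn (fun t : ℝ => (ENNReal.ofReal t ^ (1 / P.toReal) *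
      rearr ω (S.indicator 1) (ENNReal.ofReal t)) ^ (1 : ℝ≥0∞).toReal / ENNReal.ofReal t)
      ({t : ℝ | ENNReal.ofReal t < wMeas ω S}.indicator
        fun t => ENNReal.ofReal (t ^ (1 / P.toReal - 1))) (Ioi 0) := by
    intro t (ht : 0 < t)
    dsimp only
    by_cases hlt : ENNReal.ofReal t < wMeas ω S
    · rw [rearr_indicator_one, indicator_of_mem (mem_Iio.2 hlt),
        indicator_of_mem (s := {t : ℝ | ENNReal.ofReal t < _}) hlt, Pi.one_apply,
        mul_one, toReal_one, ENNReal.rpow_one, ENNReal.ofReal_rpow_of_pos ht,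
        ← ENNReal.ofReal_div_of_pos ht, Real.rpow_sub_one ht.ne']
    · rw [rearr_indicator_one, indicator_of_notMem (mt mem_Iio.1 hlt),
        indicator_of_notMem (s := {t : ℝ | ENNReal.ofReal t < _}) hlt]
      simp
  rw [lorentzNorm, if_neg one_ne_top, setLIntegral_congr_fun measurableSet_Ioi hintegrand,
    setLIntegral_Ioi_indicator_rpow_sub_one (by positivity), one_div P.toReal, inv_inv,
    ENNReal.ofReal_toReal hP, one_div P, ENNReal.inv_mul_cancel_left hP0 hP, toReal_one, div_one,
    ENNReal.rpow_one]

end Rearrangement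

section Maximal

variable {n : ℕ}

theorem setLIntegral_cube_le_HLMax {c x : EuclideanSpace ℝ (Fin n)} {h : ℝ} (hh : 0 < h)
    (hx : x ∈ cube c h) (f : EuclideanSpace ℝ (Fin n) → ℝ≥0∞) :
    (2 ^ n * volume (cube c h))⁻¹ * ∫⁻ y in cube c h, f y ≤ HLMax f x := by
  rw [← volume_cube_two_mul c x hh.le]
  calc _ ≤ (volume (cube x (2 * h)))⁻¹ * ∫⁻ y in cube x (2 * h), f y := by
        gcongr
        exact cube_subset_cube_two_mul hx
    _ ≤ HLMax f x := le_iSup (fun r : {r : ℝ // 0 < r} =>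
          (volume (cube x r.1))⁻¹ * ∫⁻ y in cube x r.1, f y) ⟨2 * h, by positivity⟩

theorem wMeas_rpow_mul_setLIntegral_cube_le (ω : EuclideanSpace ℝ (Fin n) → ℝ≥0∞)
    {P : ℝ≥0∞} (hP : 0 < P.toReal) (c : EuclideanSpace ℝ (Fin n)) {h : ℝ} (hh : 0 < h)
    (f : EuclideanSpace ℝ (Fin n) → ℝ≥0∞) :
    wMeas ω (cube c h) ^ (1 / P.toReal) * ∫⁻ y in cube c h, f y
      ≤ 2 ^ n * volume (cube c h) * lorentzNorm ω P ∞ (HLMax f) := by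
  set D : ℝ≥0∞ := 2 ^ n * volume (cube c h)
  have hD0 : D ≠ 0 := mul_ne_zero (by simp) (by simp [volume_cube c hh.le, hh])
  have hD : D ≠ ∞ := mul_ne_top (by simp) (by simp [volume_cube c hh.le])
  calc wMeas ω (cube c h) ^ (1 / P.toReal) * ∫⁻ y in cube c h, f y
      = D * (wMeas ω (cube c h) ^ (1 / P.toReal) * (D⁻¹ * ∫⁻ y in cube c h, f y)) := by
        rw [mul_left_comm, ← mul_assoc D, ENNReal.mul_inv_cancel hD0 hD, one_mul]
    _ ≤ D * lorentzNorm ω P ∞ (HLMax f) := by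
        gcongr
        exact wMeas_rpow_mul_le_lorentzNorm_top ω hP fun x hx => setLIntegral_cube_le_HLMax hh hx f

theorem vecLr_single_zero {r : ℝ} (hr : 0 < r) (f : EuclideanSpace ℝ (Fin n) → ℝ) :
    vecLr r (Pi.single 0 f) = fun x => ENNReal.ofReal |f x| := by
  funext x
  rw [vecLr, tsum_eq_single 0 fun k hk => by simp [hk, ENNReal.zero_rpow_of_pos hr],
    Pi.single_eq_same, ← ENNReal.rpow_mul, mul_one_div_cancel hr.ne', ENNReal.rpow_one]

theorem vecMaxLr_single_zero {r : ℝ} (hr : 0 < r) (f : EuclideanSpace ℝ (Fin n) → ℝ) :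
    vecMaxLr r (Pi.single 0 f) = HLMax fun y => ENNReal.ofReal |f y| := by
  funext x
  rw [vecMaxLr, tsum_eq_single 0 fun k hk => by simp [hk, HLMax, ENNReal.zero_rpow_of_pos hr],
    Pi.single_eq_same, ← ENNReal.rpow_mul, mul_one_div_cancel hr.ne', ENNReal.rpow_one]

end Maximal

section RestrictedWeakType

variable {n : ℕ} (ω : EuclideanSpace ℝ (Fin n) → ℝ≥0∞)

def RestrictedWeakTypeHLMax (P C : ℝ≥0∞) : Prop :=
  ∀ E : Set (EuclideanSpace ℝ (Fin n)), MeasurableSet E →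
    lorentzNorm ω P ∞ (HLMax (E.indicator 1)) ≤ C * wMeas ω E ^ (1 / P.toReal)

theorem restrictedWeakTypeHLMax_of_vecMaxLr {P C : ℝ≥0∞} {r : ℝ} (hr : 0 < r) (hP0 : P ≠ 0)
    (hP : P ≠ ∞)
    (hB : ∀ f : ℕ → EuclideanSpace ℝ (Fin n) → ℝ, (∀ k, Measurable (f k)) →
      lorentzNorm ω P ∞ (vecMaxLr r f) ≤ C * lorentzNorm ω P 1 (vecLr r f)) :
    RestrictedWeakTypeHLMax ω P C := by
  intro E hE
  have hχ : (fun y => ENNReal.ofReal |E.indicator (1 : EuclideanSpace ℝ (Fin n) → ℝ) y|)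
      = E.indicator 1 := by
    funext y
    by_cases hy : y ∈ E <;> simp [hy]
  have key := hB (Pi.single 0 (E.indicator 1)) fun k => by
    rcases eq_or_ne k 0 with rfl | hk
    · simpa using measurable_one.indicator hE
    · simpa [hk] using measurable_zero
  rwa [vecMaxLr_single_zero hr, vecLr_single_zero hr, hχ,
    lorentzNorm_one_indicator_one ω hP0 hP] at key

/-- `ω` need not be measurable, so its superlevel sets need not be either; they are enlarged to
those of a measurable minorant `g` of `ω` with the same density. -/
theorem exists_measurableSet_superlevel_inv {Q : Set (EuclideanSpace ℝ (Fin n))}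
    (hQ : MeasurableSet Q) (s : ℝ≥0∞) :
    ∃ E ⊆ Q, MeasurableSet E ∧ {x | s < Q.indicator (fun x => (ω x)⁻¹) x} ⊆ E ∧
      s * wMeas ω E ≤ volume E := by
  obtain ⟨g, hgm, hgω, hgω_eq⟩ := exists_measurable_le_withDensity_eq volume ω
  have hE : MeasurableSet (Q ∩ {x | g x < s⁻¹}) := hQ.inter (hgm measurableSet_Iio)
  refine ⟨Q ∩ {x | g x < s⁻¹}, inter_subset_left, hE, fun x hx => ?_, ?_⟩
  · by_cases hxQ : x ∈ Q
    · rw [mem_ofPred_eq, indicator_of_mem hxQ] at hx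
      exact ⟨hxQ, (hgω x).trans_lt (ENNReal.lt_inv_iff_lt_inv.1 hx)⟩
    · simp [indicator_of_notMem hxQ] at hx
  · calc s * wMeas ω (Q ∩ {x | g x < s⁻¹})
        = s * ∫⁻ x in Q ∩ {x | g x < s⁻¹}, g x := by
          rw [wMeas, ← hgω_eq, withDensity_apply _ hE]
      _ ≤ s * ∫⁻ _ in Q ∩ {x | g x < s⁻¹}, s⁻¹ := by
          gcongr s * ?_
          exact setLIntegral_mono' hE fun x hx => hx.2.le
      _ = s * s⁻¹ * volume (Q ∩ {x | g x < s⁻¹}) := by rw [setLIntegral_const, mul_assoc]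
      _ ≤ volume (Q ∩ {x | g x < s⁻¹}) := mul_le_of_le_one_left' (ENNReal.mul_inv_le_one s)

end RestrictedWeakType

/-- The level-set estimate of the `A(p,1)` bound, read with `a = ω(E)`, `v = |E|`, `W = ω(Q)`,
`K = 2ⁿC|Q|` and `β = 1/p`. -/
theorem ENNReal.mul_rpow_sub_mul_rpow_le {s τ a v W K : ℝ≥0∞} {β : ℝ} (hβ : β ≤ 1)
    (hτa : τ < a) (hsa : s * a ≤ v) (hv : v ≠ ∞) (hWv : W ^ β * v ≤ K * a ^ β) :
    s * τ ^ (1 - β) * W ^ β ≤ K := by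
  rcases eq_or_ne s 0 with rfl | hs
  · simp
  have ha0 : a ≠ 0 := (zero_le.trans_lt hτa).ne'
  have ha : a ≠ ∞ := by
    rintro rfl
    exact hv (top_le_iff.1 (by simpa [ENNReal.mul_top hs] using hsa))
  have haβ0 : a ^ β ≠ 0 := by simp [ENNReal.rpow_eq_zero_iff, ha0, ha]
  have haβ : a ^ β ≠ ∞ := by simp [ENNReal.rpow_eq_top_iff, ha0, ha]
  calc s * τ ^ (1 - β) * W ^ β ≤ s * a ^ (1 - β) * W ^ β := by gcongr
    _ = s * a * W ^ β * (a ^ β)⁻¹ := by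
        rw [ENNReal.rpow_sub _ _ ha0 ha, ENNReal.rpow_one, div_eq_mul_inv]
        ring
    _ ≤ K * a ^ β * (a ^ β)⁻¹ := by
        gcongr ?_ * _
        calc s * a * W ^ β ≤ v * W ^ β := by gcongr
          _ ≤ K * a ^ β := by rw [mul_comm]; exact hWv
    _ = K := ENNReal.mul_inv_cancel_right haβ0 haβ

section APq

variable {n : ℕ} {ω : EuclideanSpace ℝ (Fin n) → ℝ≥0∞}

theorem RestrictedWeakTypeHLMax.mul_rpow_le {P C : ℝ≥0∞} (hM : RestrictedWeakTypeHLMax ω P C)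
    (hP : 1 ≤ P.toReal) (c : EuclideanSpace ℝ (Fin n)) {h : ℝ} (hh : 0 < h) {s τ : ℝ≥0∞}
    (hτ : τ < distFn ω ((cube c h).indicator fun x => (ω x)⁻¹) s) :
    s * τ ^ (1 - 1 / P.toReal) * wMeas ω (cube c h) ^ (1 / P.toReal)
      ≤ 2 ^ n * C * volume (cube c h) := by
  obtain ⟨E, hEQ, hE, hsub, hsE⟩ :=
    exists_measurableSet_superlevel_inv ω (measurableSet_cube c h) s
  have hvolE : volume E ≠ ∞ :=
    ((measure_mono hEQ).trans_lt (by simp [volume_cube c hh.le])).ne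
  refine ENNReal.mul_rpow_sub_mul_rpow_le ((div_le_one (by linarith)).2 hP)
    (hτ.trans_le (measure_mono hsub)) hsE hvolE ?_
  calc wMeas ω (cube c h) ^ (1 / P.toReal) * volume E
      = wMeas ω (cube c h) ^ (1 / P.toReal) * ∫⁻ y in cube c h, E.indicator 1 y := by
        rw [lintegral_indicator_one hE, Measure.restrict_apply hE, inter_eq_left.2 hEQ]
    _ ≤ 2 ^ n * volume (cube c h) * lorentzNorm ω P ∞ (HLMax (E.indicator 1)) :=
        wMeas_rpow_mul_setLIntegral_cube_le ω (by linarith) c hh _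
    _ ≤ 2 ^ n * volume (cube c h) * (C * wMeas ω E ^ (1 / P.toReal)) := by
        gcongr
        exact hM E hE
    _ = 2 ^ n * C * volume (cube c h) * wMeas ω E ^ (1 / P.toReal) := by ring

theorem conjE_one : conjE 1 = ∞ := by
  simp [conjE]

theorem one_div_toReal_conjE_ofReal {p : ℝ} (hp : 1 < p) :
    1 / (conjE (ENNReal.ofReal p)).toReal = 1 - 1 / p := by
  rw [conjE, if_neg ofReal_ne_top, ← ENNReal.ofReal_one, ← ENNReal.ofReal_sub _ zero_le_one,
    ← ENNReal.ofReal_div_of_pos (by linarith), ENNReal.toReal_ofReal (by positivity)]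
  field_simp

theorem apq_of_restrictedWeakTypeHLMax {p : ℝ} (hp : 1 < p) {C : ℝ≥0∞} (hC0 : 0 < C)
    (hC : C < ∞) (hM : RestrictedWeakTypeHLMax ω (ENNReal.ofReal p) C) :
    Apq ω (ENNReal.ofReal p) 1 := by
  have hpP : (ENNReal.ofReal p).toReal = p := ENNReal.toReal_ofReal (by linarith)
  refine ⟨2 ^ n * C, by positivity, mul_lt_top (by simp) hC, ?_⟩
  rintro _ ⟨c, h, hh, rfl⟩
  change lorentzNorm ω _ 1 ((cube c h).indicator 1) *
    lorentzNorm ω _ (conjE 1) ((cube c h).indicator _) ≤ _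
  rw [lorentzNorm_one_indicator_one ω (ENNReal.ofReal_pos.2 (by linarith)).ne' ofReal_ne_top,
    conjE_one, lorentzNorm, if_pos rfl, one_div_toReal_conjE_ofReal hp, hpP, ENNReal.mul_iSup]
  refine iSup_le fun t => ?_
  rw [mul_comm, mul_comm (ENNReal.ofReal t ^ _), mul_assoc]
  refine ENNReal.mul_le_of_forall_lt fun s hs b hb => ?_
  calc s * b ≤ s * ENNReal.ofReal t ^ (1 - 1 / p) * wMeas ω (cube c h) ^ (1 / p) := by
        rw [mul_assoc]
        gcongr
    _ ≤ 2 ^ n * C * volume (cube c h) := by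
        have := hM.mul_rpow_le (hpP.symm ▸ hp.le) c hh (lt_distFn_of_lt_rearr_s9 ω hs)
        rwa [hpP] at this

end APq

/-- If `1 < p, r < ∞` and the vector-valued maximal operator satisfies
`‖M(f⃗)‖_{L^{p,∞}(ℓ^r,ω)} ≤ C ‖f⃗‖_{L^{p,1}(ℓ^r,ω)}` for all `f⃗`, then `ω ∈ A(p,1)`. -/
theorem stmt9 {n : ℕ} (p r : ℝ) (hp1 : 1 < p) (hr1 : 1 < r)
    (ω : EuclideanSpace ℝ (Fin n) → ℝ≥0∞)
    (hbound : ∃ C : ℝ≥0∞, 0 < C ∧ C < ∞ ∧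
      ∀ f : ℕ → EuclideanSpace ℝ (Fin n) → ℝ, (∀ k, Measurable (f k)) →
        lorentzNorm ω (ENNReal.ofReal p) ∞ (vecMaxLr r f)
          ≤ C * lorentzNorm ω (ENNReal.ofReal p) 1 (vecLr r f)) :
    Apq ω (ENNReal.ofReal p) 1 := by
  obtain ⟨C, hC0, hC, hB⟩ := hbound
  exact apq_of_restrictedWeakTypeHLMax hp1 hC0 hC <|
    restrictedWeakTypeHLMax_of_vecMaxLr ω (by linarith) (ENNReal.ofReal_pos.2 (by linarith)).ne'
      ofReal_ne_top hB
end
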